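/- Let λ ∈ (0,1), β > 0, and R₀ ∈ ℝ^{n×n} positive definite. For each k, let φ̄ₖ ∈ ℝ^{q_k×n} have full row rank and satisfy φ̄ₖᵀ φ̄ₖ ⪯ β Iₙ, and define R_{k+1} = Rₖ − (1−λ) Rₖ φ̄ₖᵀ (φ̄ₖ Rₖ φ̄ₖᵀ)⁻¹ φ̄ₖ Rₖ + φ̄ₖᵀ φ̄ₖ. Then for all k ≥ 0, λ_max(Rₖ) ≤ max{β/(1−λ), λ_max(R₀)}. -/

import Mathlib

/-!
Put `N = R - R Φᴴ (Φ R Φᴴ)⁻¹ Φ R`, so that one step reads `R' = λ R + ((1 - λ) N + Φᴴ Φ)`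
with `0 ⪯ N ⪯ R`. Since `Φ N = 0`, `N` lives on the kernel of `Φ` while `Φᴴ Φ` lives on its row
space; conjugating by the orthogonal projection `Q = Φᴴ (Φ Φᴴ)⁻¹ Φ` and by `1 - Q` splits
`(1 - λ) c - ((1 - λ) N + Φᴴ Φ)` into two nonnegative pieces as soon as `N ⪯ c` and
`Φᴴ Φ ⪯ β ≤ (1 - λ) c`. Hence `R ⪯ c` is preserved for `c = max (β / (1 - λ)) b`, and so is
positive definiteness, which keeps `Φ R Φᴴ` invertible.
-/

open Matrix
open scoped MatrixOrder ComplexOrder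

theorem IsStarProjection.add_le_of_mul_eq_zero {R : Type*} [Ring R] [PartialOrder R]
    [StarRing R] [StarOrderedRing R] {p a b c : R} (hp : IsStarProjection p)
    (ha : IsSelfAdjoint a) (hb : IsSelfAdjoint b) (hpa : p * a = 0) (hpb : p * b = b)
    (hpc : Commute p c) (hac : a ≤ c) (hbc : b ≤ c) : a + b ≤ c := by
  have hap : a * p = 0 := by
    simpa [ha.star_eq, hp.isSelfAdjoint.star_eq] using congrArg star hpa
  have hbp : b * p = b := by
    simpa [hb.star_eq, hp.isSelfAdjoint.star_eq] using congrArg star hpb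
  have hpcp : p * c * p = p * c := by
    rw [mul_assoc, ← hpc.eq, ← mul_assoc, hp.isIdempotentElem.eq]
  have hsplit : c - (a + b) = star (1 - p) * (c - a) * (1 - p) + star p * (c - b) * p := by
    simp only [hp.one_sub.isSelfAdjoint.star_eq, hp.isSelfAdjoint.star_eq, mul_sub, sub_mul,
      one_mul, mul_one, hpa, hap, hpb, hbp, hpcp, zero_mul, ← hpc.eq]
    abel
  rw [← sub_nonneg, hsplit]
  exact add_nonneg (star_left_conjugate_nonneg (sub_nonneg.2 hac) _)
    (star_left_conjugate_nonneg (sub_nonneg.2 hbc) _)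

namespace Matrix

section Gain

variable {α m n : Type*} [CommRing α] [StarRing α] [Fintype m] [DecidableEq m] [Fintype n]
  {Φ : Matrix m n α} {M : Matrix n n α}

theorem mul_sub_mul_conjTranspose_inv_mul_mul_eq_zero (hS : IsUnit (Φ * M * Φᴴ).det) :
    Φ * (M - M * Φᴴ * (Φ * M * Φᴴ)⁻¹ * Φ * M) = 0 := by
  simp only [Matrix.mul_sub, ← Matrix.mul_assoc, mul_nonsing_inv _ hS, Matrix.one_mul, sub_self]

theorem conjTranspose_inv_mul_mul_conjTranspose_inv_mul (hS : IsUnit (Φ * M * Φᴴ).det) :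
    Φᴴ * (Φ * M * Φᴴ)⁻¹ * Φ * M * (Φᴴ * (Φ * M * Φᴴ)⁻¹ * Φ) = Φᴴ * (Φ * M * Φᴴ)⁻¹ * Φ := by
  simp only [← Matrix.mul_assoc]
  rw [Matrix.mul_assoc _ Φ M, Matrix.mul_assoc _ (Φ * M) Φᴴ, nonsing_inv_mul_cancel_right _ _ hS]

theorem conjTranspose_inv_mul_mul_conjTranspose_mul (hG : IsUnit (Φ * Φᴴ).det) :
    Φᴴ * (Φ * Φᴴ)⁻¹ * Φ * (Φᴴ * Φ) = Φᴴ * Φ := by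
  rw [← Matrix.mul_assoc, Matrix.mul_assoc _ Φ, nonsing_inv_mul_cancel_right _ _ hG]

theorem isStarProjection_conjTranspose_inv_mul (hG : IsUnit (Φ * Φᴴ).det) :
    IsStarProjection (Φᴴ * (Φ * Φᴴ)⁻¹ * Φ) where
  isIdempotentElem := by
    rw [IsIdempotentElem]
    simp only [Matrix.mul_assoc]
    rw [← Matrix.mul_assoc Φ Φᴴ, nonsing_inv_mul_cancel_left _ _ hG]
  isSelfAdjoint := by
    rw [IsSelfAdjoint, star_eq_conjTranspose, conjTranspose_mul, conjTranspose_mul,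
      conjTranspose_conjTranspose, conjTranspose_nonsing_inv, conjTranspose_mul,
      conjTranspose_conjTranspose, Matrix.mul_assoc]

end Gain

section Positivity

variable {𝕜 m n : Type*} [RCLike 𝕜] [Fintype m] [DecidableEq m] [Fintype n]
  {Φ : Matrix m n 𝕜} {M : Matrix n n 𝕜}

theorem PosSemidef.mul_conjTranspose_inv_mul_mul (hM : M.PosSemidef) :
    (M * Φᴴ * (Φ * M * Φᴴ)⁻¹ * Φ * M).PosSemidef := by
  have := (hM.mul_mul_conjTranspose_same Φ).inv.mul_mul_conjTranspose_same (M * Φᴴ)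
  simpa only [conjTranspose_mul, conjTranspose_conjTranspose, hM.isHermitian.eq,
    Matrix.mul_assoc] using this

theorem PosSemidef.sub_mul_conjTranspose_inv_mul_mul [DecidableEq n] (hM : M.PosSemidef)
    (hS : IsUnit (Φ * M * Φᴴ).det) : (M - M * Φᴴ * (Φ * M * Φᴴ)⁻¹ * Φ * M).PosSemidef := by
  set J := Φᴴ * (Φ * M * Φᴴ)⁻¹ * Φ with hJ
  have hJMJ : J * M * J = J := conjTranspose_inv_mul_mul_conjTranspose_inv_mul hS
  have hJ_herm : Jᴴ = J :=
    ((hM.mul_mul_conjTranspose_same Φ).inv.conjTranspose_mul_mul_same Φ).isHermitian.eq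
  have hconj : (1 - M * J) * M * (1 - M * J)ᴴ = M - M * J * M := by
    rw [conjTranspose_sub, conjTranspose_one, conjTranspose_mul, hJ_herm, hM.isHermitian.eq]
    calc (1 - M * J) * M * (1 - J * M)
        = M - M * J * M - M * J * M + M * (J * M * J) * M := by noncomm_ring
      _ = M - M * J * M := by rw [hJMJ]; abel
  have hJ_assoc : M * Φᴴ * (Φ * M * Φᴴ)⁻¹ * Φ * M = M * J * M := by
    simp only [hJ, Matrix.mul_assoc]
  rw [hJ_assoc, ← hconj]
  exact hM.mul_mul_conjTranspose_same _

end Positivity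

theorem vecMul_injective_of_rank_eq_card {K m n : Type*} [Field K] [Fintype m] [Fintype n]
    {A : Matrix m n K} (h : A.rank = Fintype.card m) : Function.Injective A.vecMul := by
  rw [vecMul_injective_iff, linearIndependent_iff_card_eq_finrank_span, Set.finrank,
    ← rank_eq_finrank_span_row, h]

end Matrix

section SiftRls

variable {𝕜 m n : Type*} [RCLike 𝕜] [Fintype m] [DecidableEq m] [Fintype n]

noncomputable def siftRlsUpdate (lam : ℝ) (Φ : Matrix m n 𝕜) (R : Matrix n n 𝕜) :
    Matrix n n 𝕜 :=
  R - (1 - lam) • (R * Φᴴ * (Φ * R * Φᴴ)⁻¹ * Φ * R) + Φᴴ * Φ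

variable {lam : ℝ} {Φ : Matrix m n 𝕜} {R : Matrix n n 𝕜}

theorem siftRlsUpdate_eq_smul_add (lam : ℝ) (Φ : Matrix m n 𝕜) (R : Matrix n n 𝕜) :
    siftRlsUpdate lam Φ R =
      lam • R + ((1 - lam) • (R - R * Φᴴ * (Φ * R * Φᴴ)⁻¹ * Φ * R) + Φᴴ * Φ) := by
  rw [siftRlsUpdate]
  module

theorem posDef_siftRlsUpdate [DecidableEq n] (hlam0 : 0 < lam) (hlam1 : lam ≤ 1)
    (hΦ : Function.Injective Φ.vecMul) (hR : R.PosDef) : (siftRlsUpdate lam Φ R).PosDef := by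
  have hS : IsUnit (Φ * R * Φᴴ).det :=
    (isUnit_iff_isUnit_det _).mp (hR.mul_mul_conjTranspose_same hΦ).isUnit
  rw [siftRlsUpdate_eq_smul_add]
  exact (hR.smul hlam0).add_posSemidef
    (((hR.posSemidef.sub_mul_conjTranspose_inv_mul_mul hS).smul (sub_nonneg.2 hlam1)).add
      (posSemidef_conjTranspose_mul_self Φ))

theorem siftRlsUpdate_le [DecidableEq n] {β c : ℝ} (hlam0 : 0 ≤ lam) (hlam1 : lam ≤ 1)
    (hΦ : Function.Injective Φ.vecMul) (hR : R.PosDef) (hRc : R ≤ c • 1)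
    (hΦβ : Φᴴ * Φ ≤ β • 1) (hβc : β ≤ (1 - lam) * c) :
    siftRlsUpdate lam Φ R ≤ c • 1 := by
  have hS : IsUnit (Φ * R * Φᴴ).det :=
    (isUnit_iff_isUnit_det _).mp (hR.mul_mul_conjTranspose_same hΦ).isUnit
  have hG : IsUnit (Φ * Φᴴ).det := by
    simpa using (isUnit_iff_isUnit_det _).mp (PosDef.one.mul_mul_conjTranspose_same hΦ).isUnit
  set N := R - R * Φᴴ * (Φ * R * Φᴴ)⁻¹ * Φ * R
  have hμ : 0 ≤ 1 - lam := sub_nonneg.2 hlam1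
  have hN_nonneg : 0 ≤ (1 - lam) • N :=
    smul_nonneg hμ (hR.posSemidef.sub_mul_conjTranspose_inv_mul_mul hS).nonneg
  have hN_le : (1 - lam) • N ≤ ((1 - lam) * c) • 1 := by
    rw [← smul_smul]
    exact smul_le_smul_of_nonneg_left
      ((sub_le_self _ hR.posSemidef.mul_conjTranspose_inv_mul_mul.nonneg).trans hRc) hμ
  have hΦ_le : Φᴴ * Φ ≤ ((1 - lam) * c) • 1 :=
    hΦβ.trans (smul_le_smul_of_nonneg_right hβc zero_le_one)
  have hQN : Φᴴ * (Φ * Φᴴ)⁻¹ * Φ * ((1 - lam) • N) = 0 := by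
    rw [Matrix.mul_smul, Matrix.mul_assoc, mul_sub_mul_conjTranspose_inv_mul_mul_eq_zero hS,
      Matrix.mul_zero, smul_zero]
  have hinner : (1 - lam) • N + Φᴴ * Φ ≤ ((1 - lam) * c) • 1 :=
    (isStarProjection_conjTranspose_inv_mul hG).add_le_of_mul_eq_zero (.of_nonneg hN_nonneg)
      (.of_nonneg (posSemidef_conjTranspose_mul_self Φ).nonneg) hQN
      (conjTranspose_inv_mul_mul_conjTranspose_mul hG) ((Commute.one_right _).smul_right _)
      hN_le hΦ_le
  calc siftRlsUpdate lam Φ R = lam • R + ((1 - lam) • N + Φᴴ * Φ) := siftRlsUpdate_eq_smul_add ..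
    _ ≤ lam • (c • 1) + ((1 - lam) * c) • 1 :=
      add_le_add (smul_le_smul_of_nonneg_left hRc hlam0) hinner
    _ = c • 1 := by rw [smul_smul, ← add_smul]; congr 1; ring

end SiftRls

theorem sift_rls_information_upper_bound_general
    {n : ℕ} (lam : ℝ) (hlam : lam ∈ Set.Ioo (0:ℝ) 1)
    (β : ℝ)
    (q : ℕ → ℕ) (φ : (k : ℕ) → Matrix (Fin (q k)) (Fin n) ℝ)
    (hrank : ∀ k, (φ k).rank = q k)
    (hbdd : ∀ k, (β • (1 : Matrix (Fin n) (Fin n) ℝ) - (φ k)ᵀ * φ k).PosSemidef)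
    (R : ℕ → Matrix (Fin n) (Fin n) ℝ) (hR0 : (R 0).PosDef)
    (hrec : ∀ k, R (k + 1) =
      R k - (1 - lam) • (R k * (φ k)ᵀ * (φ k * R k * (φ k)ᵀ)⁻¹ * φ k * R k)
        + (φ k)ᵀ * φ k) :
    ∀ b : ℝ, (b • (1 : Matrix (Fin n) (Fin n) ℝ) - R 0).PosSemidef →
      ∀ k, (max (β / (1 - lam)) b • (1 : Matrix (Fin n) (Fin n) ℝ) - R k).PosSemidef := by
  obtain ⟨hlam0, hlam1⟩ := hlam
  intro b hb
  set c := max (β / (1 - lam)) b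
  have hβc : β ≤ (1 - lam) * c := by
    rw [← div_le_iff₀' (sub_pos.2 hlam1)]
    exact le_max_left _ _
  have hinj k : Function.Injective (φ k).vecMul :=
    vecMul_injective_of_rank_eq_card (by rw [hrank, Fintype.card_fin])
  have hstep k : R (k + 1) = siftRlsUpdate lam (φ k) (R k) := by
    rw [hrec, siftRlsUpdate, conjTranspose_eq_transpose_of_trivial]
  suffices h : ∀ k, (R k).PosDef ∧ R k ≤ c • 1 from fun k => (h k).2
  intro k
  induction k with
  | zero =>
    exact ⟨hR0, (le_iff.2 hb).trans (smul_le_smul_of_nonneg_right (le_max_right _ _) zero_le_one)⟩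
  | succ k ih =>
    rw [hstep]
    exact ⟨posDef_siftRlsUpdate hlam0 hlam1.le (hinj k) ih.1,
      siftRlsUpdate_le hlam0.le hlam1.le (hinj k) ih.1 ih.2
        (le_iff.2 (by simpa only [conjTranspose_eq_transpose_of_trivial] using hbdd k)) hβc⟩

/-- SIFt-RLS upper covariance bound: if every filtered regressor `φ̄ₖ ∈ ℝ^{q_k×n}` has full
row rank and satisfies `φ̄ₖᵀ φ̄ₖ ⪯ β Iₙ`, then `λ_max(Rₖ) ≤ max {β/(1−λ), λ_max(R₀)}`,
expressed in the Loewner order: for every `b` with `R₀ ⪯ b Iₙ` we have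
`Rₖ ⪯ max (β/(1−λ)) b • Iₙ`. -/
theorem sift_rls_information_upper_bound
    {n : ℕ} (lam : ℝ) (hlam : lam ∈ Set.Ioo (0:ℝ) 1)
    (β : ℝ) (hβ : 0 < β)
    (q : ℕ → ℕ) (φ : (k : ℕ) → Matrix (Fin (q k)) (Fin n) ℝ)
    (hrank : ∀ k, (φ k).rank = q k)
    (hbdd : ∀ k, (β • (1 : Matrix (Fin n) (Fin n) ℝ) - (φ k)ᵀ * φ k).PosSemidef)
    (R : ℕ → Matrix (Fin n) (Fin n) ℝ) (hR0 : (R 0).PosDef)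
    (hrec : ∀ k, R (k + 1) =
      R k - (1 - lam) • (R k * (φ k)ᵀ * (φ k * R k * (φ k)ᵀ)⁻¹ * φ k * R k)
        + (φ k)ᵀ * φ k) :
    ∀ b : ℝ, (b • (1 : Matrix (Fin n) (Fin n) ℝ) - R 0).PosSemidef →
      ∀ k, (max (β / (1 - lam)) b • (1 : Matrix (Fin n) (Fin n) ℝ) - R k).PosSemidef :=
  sift_rls_information_upper_bound_general lam hlam β q φ hrank hbdd R hR0 hrec
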